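/- Let E be a field and g ∈ E⟦x₁,...,xₙ⟧[z] a polynomial in z with power series coefficients such that g(0,...,0, 0) = 0 and ∂g/∂z(0,...,0, 0) ≠ 0 (i.e., the constant coefficient γ₀ of g has positive order or is zero and the linear coefficient γ₁ is a unit). Then there exists a unique power series α ∈ E⟦x₁,...,xₙ⟧ with α(0,...,0) = 0 and g(α) = 0. -/

import Mathlib

/-!
Newton's iteration `x ↦ x - g(x) / g'(x)`, started at `0`, stays in the maximal ideal, where `g'`
is a unit because its constant term is that of `γ₁`; each step doubles the order of `g(x)`, so the
iterates converge coefficientwise to a root. If `a` and `b` are roots in the maximal ideal, Taylor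
expansion gives `0 = g(b) - g(a) = (g'(a) + u (b - a)) (b - a)`, and the first factor is a unit.
-/

open Polynomial

namespace Polynomial

variable {R S : Type*} [CommRing R] [CommRing S] [Algebra R S] {P : R[X]} {I : Ideal S} {x : S}

theorem newtonMap_sub_mem (h : aeval x P ∈ I) : P.newtonMap x - x ∈ I := by
  rw [newtonMap_apply, sub_sub_cancel_left]
  exact I.neg_mem (I.mul_mem_left _ h)

theorem aeval_newtonMap_mem_sq (h : aeval x P ∈ I) (h' : IsUnit (aeval x (derivative P))) :
    aeval (P.newtonMap x) P ∈ I ^ 2 := by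
  set e := -(Ring.inverse (aeval x (derivative P)) * aeval x P)
  obtain ⟨k, hk⟩ := binomExpansion (P.map (algebraMap R S)) x e
  rw [derivative_map, eval_map_algebraMap, eval_map_algebraMap, eval_map_algebraMap] at hk
  have hcancel : aeval x P + aeval x (derivative P) * e = 0 := by
    rw [mul_neg, ← mul_assoc, Ring.mul_inverse_cancel _ h', one_mul, add_neg_cancel]
  rw [newtonMap_apply, sub_eq_add_neg, hk, hcancel, zero_add]
  exact Ideal.mul_mem_left _ _ (Ideal.pow_mem_pow (I.neg_mem (I.mul_mem_left _ h)) 2)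

end Polynomial

namespace MvPowerSeries

section CommSemiring

variable {σ R : Type*} [CommSemiring R]

variable (σ R) in
def orderIdeal (k : ℕ) : Ideal (MvPowerSeries σ R) where
  carrier := {f | (k : ℕ∞) ≤ f.order}
  zero_mem' := by simp
  add_mem' ha hb := (le_min ha hb).trans min_order_le_add
  smul_mem' _ _ hf := (le_add_left hf).trans le_order_mul

theorem mem_orderIdeal {k : ℕ} {f : MvPowerSeries σ R} :
    f ∈ orderIdeal σ R k ↔ (k : ℕ∞) ≤ f.order :=
  Iff.rfl

theorem orderIdeal_antitone : Antitone (orderIdeal σ R) :=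
  fun _ _ hkl _ hf => mem_orderIdeal.mpr ((Nat.cast_le.mpr hkl).trans hf)

theorem orderIdeal_mul_le (k l : ℕ) :
    orderIdeal σ R k * orderIdeal σ R l ≤ orderIdeal σ R (k + l) :=
  Ideal.mul_le.mpr fun _ hf _ hg => by
    rw [mem_orderIdeal, Nat.cast_add]
    exact (add_le_add hf hg).trans le_order_mul

theorem mem_orderIdeal_one {f : MvPowerSeries σ R} :
    f ∈ orderIdeal σ R 1 ↔ constantCoeff f = 0 := by
  rw [mem_orderIdeal, Nat.cast_one, one_le_order_iff_constCoeff_eq_zero]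

theorem eq_zero_of_forall_mem_orderIdeal {f : MvPowerSeries σ R}
    (h : ∀ k, f ∈ orderIdeal σ R k) : f = 0 :=
  order_eq_top_iff.mp (ENat.eq_top_iff_forall_ge.mpr h)

theorem constantCoeff_eval_of_constantCoeff_eq_zero (p : (MvPowerSeries σ R)[X])
    {a : MvPowerSeries σ R} (ha : constantCoeff a = 0) :
    constantCoeff (p.eval a) = constantCoeff (p.coeff 0) := by
  rw [eval, hom_eval₂, RingHomCompTriple.comp_eq, ha, eval₂_at_zero]

end CommSemiring

variable {σ R : Type*} [CommRing R]

theorem exists_forall_sub_mem_orderIdeal (c : ℕ → MvPowerSeries σ R)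
    (hc : ∀ m, c (m + 1) - c m ∈ orderIdeal σ R (m + 1)) :
    ∃ a, ∀ m, a - c m ∈ orderIdeal σ R (m + 1) := by
  have tail : ∀ m k, c (m + k) - c m ∈ orderIdeal σ R (m + 1) := by
    intro m k
    induction k with
    | zero => simp
    | succ k ih =>
      rw [← add_assoc, ← sub_add_sub_cancel _ (c (m + k))]
      exact add_mem (orderIdeal_antitone (by omega) (hc (m + k))) ih
  -- the coefficient at `d` is stable from step `degree d` on
  let a : MvPowerSeries σ R := fun d => coeff d (c d.degree)
  refine ⟨a, fun m => nat_le_order fun d hd => ?_⟩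
  obtain ⟨k, rfl⟩ := Nat.exists_eq_add_of_le (Nat.lt_succ_iff.mp hd)
  have hcoeff : coeff d (c (d.degree + k) - c d.degree) = 0 :=
    coeff_of_lt_order ((ENat.natCast_lt_natCast.mpr d.degree.lt_succ_self).trans_le (tail _ k))
  rw [map_sub] at hcoeff ⊢
  change coeff d (c d.degree) - _ = 0
  rw [← neg_eq_zero, neg_sub, hcoeff]

theorem isUnit_eval_derivative (g : (MvPowerSeries σ R)[X])
    (h1 : IsUnit (constantCoeff ((derivative g).coeff 0))) {a : MvPowerSeries σ R}
    (ha : constantCoeff a = 0) : IsUnit ((derivative g).eval a) := by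
  rwa [isUnit_iff_constantCoeff, constantCoeff_eval_of_constantCoeff_eq_zero _ ha]

theorem exists_eval_eq_zero (g : (MvPowerSeries σ R)[X]) (h0 : constantCoeff (g.coeff 0) = 0)
    (h1 : IsUnit (constantCoeff ((derivative g).coeff 0))) :
    ∃ a : MvPowerSeries σ R, constantCoeff a = 0 ∧ g.eval a = 0 := by
  let x : ℕ → MvPowerSeries σ R := fun m => g.newtonMap^[m] 0
  have hx_succ : ∀ m, x (m + 1) = g.newtonMap (x m) := fun m => Function.iterate_succ_apply' ..
  have hx : ∀ m, x m ∈ orderIdeal σ R 1 ∧ Polynomial.aeval (x m) g ∈ orderIdeal σ R (m + 1) := by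
    intro m
    induction m with
    | zero => simpa [x, mem_orderIdeal_one, ← coeff_zero_eq_aeval_zero] using h0
    | succ m ih =>
      have hunit : IsUnit (Polynomial.aeval (x m) (derivative g)) := by
        rw [coe_aeval_eq_eval]
        exact isUnit_eval_derivative g h1 (mem_orderIdeal_one.mp ih.1)
      have hsq := aeval_newtonMap_mem_sq ih.2 hunit
      rw [sq] at hsq
      refine ⟨?_, hx_succ m ▸ orderIdeal_antitone (by omega) (orderIdeal_mul_le _ _ hsq)⟩
      rw [hx_succ, ← sub_add_cancel (g.newtonMap (x m)) (x m)]
      exact add_mem (orderIdeal_antitone (by omega) (newtonMap_sub_mem ih.2)) ih.1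
  obtain ⟨a, ha⟩ := exists_forall_sub_mem_orderIdeal x fun m => by
    rw [hx_succ]
    exact newtonMap_sub_mem (hx m).2
  refine ⟨a, mem_orderIdeal_one.mp (by simpa [x] using ha 0),
    eq_zero_of_forall_mem_orderIdeal fun m => orderIdeal_antitone m.le_succ ?_⟩
  have hxm : g.eval (x m) ∈ orderIdeal σ R (m + 1) := by
    simpa only [coe_aeval_eq_eval] using (hx m).2
  rw [← sub_add_cancel (g.eval a) (g.eval (x m))]
  exact add_mem ((orderIdeal σ R _).mem_of_dvd (sub_dvd_eval_sub a (x m) g) (ha m)) hxm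

theorem eq_of_eval_eq_zero (g : (MvPowerSeries σ R)[X])
    (h1 : IsUnit (constantCoeff ((derivative g).coeff 0))) {a b : MvPowerSeries σ R}
    (ha0 : constantCoeff a = 0) (hb0 : constantCoeff b = 0) (ha : g.eval a = 0)
    (hb : g.eval b = 0) : a = b := by
  obtain ⟨u, hu⟩ := binomExpansion g a (b - a)
  rw [add_sub_cancel, ha, hb, zero_add, sq, ← mul_assoc, ← add_mul] at hu
  have hunit : IsUnit ((derivative g).eval a + u * (b - a)) := by
    rw [isUnit_iff_constantCoeff, map_add, map_mul, map_sub, ha0, hb0, sub_zero, mul_zero,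
      add_zero, ← isUnit_iff_constantCoeff]
    exact isUnit_eval_derivative g h1 ha0
  exact (sub_eq_zero.mp (hunit.mul_right_eq_zero.mp hu.symm)).symm

theorem existsUnique_eval_eq_zero (g : (MvPowerSeries σ R)[X])
    (h0 : constantCoeff (g.coeff 0) = 0) (h1 : IsUnit (constantCoeff ((derivative g).coeff 0))) :
    ∃! a : MvPowerSeries σ R, constantCoeff a = 0 ∧ g.eval a = 0 := by
  obtain ⟨a, ha0, ha⟩ := exists_eval_eq_zero g h0 h1
  exact ⟨a, ⟨ha0, ha⟩, fun b ⟨hb0, hb⟩ => eq_of_eval_eq_zero g h1 hb0 ha0 hb ha⟩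

end MvPowerSeries

/-- Formal implicit function theorem: if `g ∈ E⟦x₁,…,xₙ⟧[z]` satisfies `g(0,0) = 0` and
`(∂g/∂z)(0,0) ≠ 0`, then `g` has a unique power series root `α` with `α(0) = 0`. -/
theorem stmt11 {E : Type*} [Field E] (n : ℕ)
    (g : Polynomial (MvPowerSeries (Fin n) E))
    (h0 : MvPowerSeries.constantCoeff (g.coeff 0) = 0)
    (h1 : MvPowerSeries.constantCoeff ((Polynomial.derivative g).coeff 0) ≠ 0) :
    ∃! α : MvPowerSeries (Fin n) E,
      MvPowerSeries.constantCoeff α = 0 ∧ Polynomial.eval α g = 0 :=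
  MvPowerSeries.existsUnique_eval_eq_zero g h0 h1.isUnit
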